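/- arXiv:1110.4355 — 2 statements merged into one kernel-verified Lean document; each statement's English description precedes it below -/
import Mathlib

section
/- Let p ∈ [0,1], let Q be an m×m real symmetric positive definite matrix, R a p×p real symmetric positive definite matrix, F an m×m real matrix and H a p×m real matrix. Define, for an m×m real symmetric positive definite P, g(P) = p · log( det(F P Fᵀ + Q − F P Hᵀ (H P Hᵀ + R)⁻¹ H P Fᵀ) / det(P) ) + (1 − p) · log( det(F P Fᵀ + Q) / det(P) ). Then g is strictly decreasing with respect to the Loewner order: if P₁ ≻ P₂ ≻ 0 then g(P₁) < g(P₂). -/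
/-!
Both one-step ratios reduce to determinants that are strictly antitone in `P` for the Loewner
order. By the matrix determinant lemma, `det (F P Fᵀ + Q) / det P = det Q · det (P⁻¹ + Fᵀ Q⁻¹ F)`,
and `P ↦ P⁻¹` is strictly antitone. By the Woodbury identity the Riccati update is the Lyapunov
update of `(P⁻¹ + Hᵀ R⁻¹ H)⁻¹`, which turns its ratio into
`det Q · det R · det (P⁻¹ + Hᵀ R⁻¹ H + Fᵀ Q⁻¹ F) / det (H P Hᵀ + R)`: a strictly decreasing
numerator over a nondecreasing denominator. Strict monotonicity of the determinant itself comes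
from `det (A + D) = det A · det (1 + K)` with `K` congruent to `D`, and `det (1 + K) > 1` for
`K ≻ 0`, read off from the eigenvalues.
-/

open Matrix

namespace Matrix

variable {n k : Type*} [Fintype n] [Fintype k]

lemma PosSemidef.mul_mul_transpose_same {P : Matrix n n ℝ} (hP : P.PosSemidef)
    (H : Matrix k n ℝ) : (H * P * Hᵀ).PosSemidef := by
  simpa using hP.mul_mul_conjTranspose_same H

lemma PosSemidef.transpose_mul_mul_same {P : Matrix k k ℝ} (hP : P.PosSemidef)
    (H : Matrix k n ℝ) : (Hᵀ * P * H).PosSemidef := by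
  simpa using hP.conjTranspose_mul_mul_same H

variable [DecidableEq n] [DecidableEq k]

lemma IsHermitian.det_one_add {K : Matrix n n ℝ} (hK : K.IsHermitian) :
    (1 + K).det = ∏ i, (1 + hK.eigenvalues i) := by
  rw [show 1 + K = cfc (fun x : ℝ => 1 + x) K by rw [cfc_add .., cfc_const_one .., cfc_id' ..],
    hK.cfc_eq]
  simp [IsHermitian.cfc, -Unitary.conjStarAlgAut_apply]

lemma PosSemidef.one_le_det_one_add {K : Matrix n n ℝ} (hK : K.PosSemidef) :
    1 ≤ (1 + K).det := by
  rw [hK.isHermitian.det_one_add]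
  exact Finset.one_le_prod fun i _ => le_add_of_nonneg_right (hK.eigenvalues_nonneg i)

lemma PosDef.one_lt_det_one_add [Nonempty n] {K : Matrix n n ℝ} (hK : K.PosDef) :
    1 < (1 + K).det := by
  rw [hK.isHermitian.det_one_add]
  simpa using Finset.prod_lt_prod_of_nonempty (f := fun _ => (1 : ℝ)) (fun _ _ => one_pos)
    (fun i _ => lt_add_of_pos_right 1 (hK.eigenvalues_pos i)) Finset.univ_nonempty

open scoped MatrixOrder in
lemma PosDef.exists_det_add_eq {A : Matrix n n ℝ} (hA : A.PosDef) :
    ∃ U : Matrix n n ℝ, IsUnit U ∧ ∀ D, (A + D).det = A.det * (1 + star U * D * U).det := by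
  obtain ⟨C, rfl⟩ := CStarAlgebra.nonneg_iff_eq_star_mul_self.mp hA.posSemidef.nonneg
  have hC : IsUnit C.det := by
    have h := (isUnit_iff_isUnit_det _).mp hA.isUnit
    rw [det_mul] at h
    exact isUnit_of_mul_isUnit_right h
  refine ⟨C⁻¹, isUnit_nonsing_inv_iff.mpr ((isUnit_iff_isUnit_det C).mpr hC), fun D => ?_⟩
  have hCC : star C * star C⁻¹ = 1 := by rw [← star_mul, nonsing_inv_mul _ hC, star_one]
  have h : star C * C + D = star C * (1 + star C⁻¹ * D * C⁻¹) * C := by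
    simp only [Matrix.mul_add, Matrix.add_mul, Matrix.mul_one, ← Matrix.mul_assoc, hCC,
      Matrix.one_mul, nonsing_inv_mul_cancel_right _ _ hC]
  rw [h, det_mul, det_mul, det_mul]
  ring

lemma PosDef.det_le_det_of_posSemidef_sub {A B : Matrix n n ℝ} (hA : A.PosDef)
    (hAB : (B - A).PosSemidef) : A.det ≤ B.det := by
  obtain ⟨U, -, hU⟩ := hA.exists_det_add_eq
  rw [← add_sub_cancel A B, hU]
  refine le_mul_of_one_le_right hA.det_pos.le (PosSemidef.one_le_det_one_add ?_)
  simpa only [star_eq_conjTranspose] using hAB.conjTranspose_mul_mul_same U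

lemma PosDef.det_lt_det_of_posDef_sub [Nonempty n] {A B : Matrix n n ℝ} (hA : A.PosDef)
    (hAB : (B - A).PosDef) : A.det < B.det := by
  obtain ⟨U, hU, hdet⟩ := hA.exists_det_add_eq
  rw [← add_sub_cancel A B, hdet]
  exact lt_mul_of_one_lt_right hA.det_pos
    ((IsUnit.posDef_star_left_conjugate_iff hU).mpr hAB).one_lt_det_one_add

/-- Woodbury with `U = V = 1`: `B⁻¹ - A⁻¹ = B⁻¹ ((A - B)⁻¹ + B⁻¹)⁻¹ B⁻¹`. -/
lemma PosDef.inv_sub_inv {A B : Matrix n n ℝ} (hB : B.PosDef) (hAB : (A - B).PosDef) :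
    (B⁻¹ - A⁻¹).PosDef := by
  have hW := add_mul_mul_inv_eq_sub B 1 (A - B) 1 hB.isUnit hAB.isUnit
    (by simpa using (hAB.inv.add hB.inv).isUnit)
  simp only [Matrix.mul_one, Matrix.one_mul, add_sub_cancel] at hW
  rw [hW, sub_sub_cancel]
  have hBt : star B⁻¹ = B⁻¹ := hB.inv.isHermitian.eq
  simpa only [hBt] using (IsUnit.posDef_star_left_conjugate_iff hB.inv.isUnit).mpr
    (hAB.inv.add hB.inv).inv

lemma det_mul_mul_add {α : Type*} [CommRing α] {P : Matrix n n α} {Q : Matrix k k α}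
    (hP : IsUnit P.det) (hQ : IsUnit Q.det) (U : Matrix k n α) (V : Matrix n k α) :
    (U * P * V + Q).det = Q.det * P.det * (P⁻¹ + V * Q⁻¹ * U).det := by
  rw [add_comm, Matrix.mul_assoc, det_add_mul _ _ hQ, mul_assoc, ← det_mul, Matrix.mul_add,
    mul_nonsing_inv _ hP]
  simp only [Matrix.mul_assoc]

end Matrix

noncomputable section Kalman

variable {n k : Type*} [Fintype n] [DecidableEq n] [Fintype k] [DecidableEq k]

def lyapunovUpdate (F Q P : Matrix n n ℝ) : Matrix n n ℝ := F * P * Fᵀ + Q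

def riccatiUpdate (F Q : Matrix n n ℝ) (H : Matrix k n ℝ) (R : Matrix k k ℝ) (P : Matrix n n ℝ) :
    Matrix n n ℝ :=
  F * P * Fᵀ + Q - F * P * Hᵀ * (H * P * Hᵀ + R)⁻¹ * H * P * Fᵀ

variable {F Q P P₁ P₂ : Matrix n n ℝ} {H : Matrix k n ℝ} {R : Matrix k k ℝ}

lemma det_lyapunovUpdate_div_det (hQ : Q.PosDef) (hP : P.PosDef) :
    (lyapunovUpdate F Q P).det / P.det = Q.det * (P⁻¹ + Fᵀ * Q⁻¹ * F).det := by
  rw [lyapunovUpdate, det_mul_mul_add hP.det_pos.ne'.isUnit hQ.det_pos.ne'.isUnit]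
  field_simp [hP.det_pos.ne']

lemma riccatiUpdate_eq_lyapunovUpdate (hP : P.PosDef) (hR : R.PosDef) :
    riccatiUpdate F Q H R P = lyapunovUpdate F Q (P⁻¹ + Hᵀ * R⁻¹ * H)⁻¹ := by
  have hW := add_mul_mul_inv_eq_sub P⁻¹ Hᵀ R⁻¹ H hP.inv.isUnit hR.inv.isUnit
  rw [nonsing_inv_nonsing_inv _ hP.det_pos.ne'.isUnit,
    nonsing_inv_nonsing_inv _ hR.det_pos.ne'.isUnit, add_comm R] at hW
  rw [riccatiUpdate, lyapunovUpdate,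
    hW (PosDef.posSemidef_add (hP.posSemidef.mul_mul_transpose_same H) hR).isUnit]
  simp only [Matrix.mul_sub, Matrix.sub_mul, Matrix.mul_assoc]
  abel

lemma det_riccatiUpdate_div_det (hQ : Q.PosDef) (hP : P.PosDef) (hR : R.PosDef) :
    (riccatiUpdate F Q H R P).det / P.det =
      Q.det * R.det * (P⁻¹ + Hᵀ * R⁻¹ * H + Fᵀ * Q⁻¹ * F).det / (H * P * Hᵀ + R).det := by
  have hX : (P⁻¹ + Hᵀ * R⁻¹ * H).PosDef :=
    hP.inv.add_posSemidef (hR.inv.posSemidef.transpose_mul_mul_same H)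
  have hLyap := det_lyapunovUpdate_div_det (F := F) hQ hX.inv
  rw [nonsing_inv_nonsing_inv _ hX.det_pos.ne'.isUnit, det_nonsing_inv,
    Ring.inverse_eq_inv', div_inv_eq_mul] at hLyap
  rw [riccatiUpdate_eq_lyapunovUpdate hP hR,
    det_mul_mul_add hP.det_pos.ne'.isUnit hR.det_pos.ne'.isUnit]
  field_simp [hP.det_pos.ne', hX.det_pos.ne', hR.det_pos.ne']
  linear_combination hLyap

lemma log_det_lyapunovUpdate_div_det_lt [Nonempty n] (hQ : Q.PosDef) (hP₂ : P₂.PosDef)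
    (h12 : (P₁ - P₂).PosDef) :
    Real.log ((lyapunovUpdate F Q P₁).det / P₁.det)
      < Real.log ((lyapunovUpdate F Q P₂).det / P₂.det) := by
  have hP₁ : P₁.PosDef := by simpa using hP₂.add h12
  have hX₁ : (P₁⁻¹ + Fᵀ * Q⁻¹ * F).PosDef :=
    hP₁.inv.add_posSemidef (hQ.inv.posSemidef.transpose_mul_mul_same F)
  rw [det_lyapunovUpdate_div_det hQ hP₁, det_lyapunovUpdate_div_det hQ hP₂]
  refine Real.log_lt_log (mul_pos hQ.det_pos hX₁.det_pos)
    (mul_lt_mul_of_pos_left (hX₁.det_lt_det_of_posDef_sub ?_) hQ.det_pos)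
  simpa only [add_sub_add_right_eq_sub] using hP₂.inv_sub_inv h12

lemma log_det_riccatiUpdate_div_det_lt [Nonempty n] (hQ : Q.PosDef) (hR : R.PosDef)
    (hP₂ : P₂.PosDef) (h12 : (P₁ - P₂).PosDef) :
    Real.log ((riccatiUpdate F Q H R P₁).det / P₁.det)
      < Real.log ((riccatiUpdate F Q H R P₂).det / P₂.det) := by
  have hP₁ : P₁.PosDef := by simpa using hP₂.add h12
  have hY : ∀ {P : Matrix n n ℝ}, P.PosDef → (P⁻¹ + Hᵀ * R⁻¹ * H + Fᵀ * Q⁻¹ * F).PosDef :=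
    fun hP => (hP.inv.add_posSemidef (hR.inv.posSemidef.transpose_mul_mul_same H)).add_posSemidef
      (hQ.inv.posSemidef.transpose_mul_mul_same F)
  have hW : ∀ {P : Matrix n n ℝ}, P.PosDef → (H * P * Hᵀ + R).PosDef := fun hP =>
    PosDef.posSemidef_add (hP.posSemidef.mul_mul_transpose_same H) hR
  have hQR : 0 < Q.det * R.det := mul_pos hQ.det_pos hR.det_pos
  rw [det_riccatiUpdate_div_det hQ hP₁ hR, det_riccatiUpdate_div_det hQ hP₂ hR]
  refine Real.log_lt_log (div_pos (mul_pos hQR (hY hP₁).det_pos) (hW hP₁).det_pos)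
    (div_lt_div₀ (mul_lt_mul_of_pos_left ((hY hP₁).det_lt_det_of_posDef_sub ?_) hQR)
      ((hW hP₂).det_le_det_of_posSemidef_sub ?_) (mul_pos hQR (hY hP₂).det_pos).le
      (hW hP₂).det_pos)
  · simpa only [add_sub_add_right_eq_sub] using hP₂.inv_sub_inv h12
  · rw [add_sub_add_right_eq_sub, ← Matrix.sub_mul, ← Matrix.mul_sub]
    exact h12.posSemidef.mul_mul_transpose_same H

end Kalman

theorem expected_logdet_ratio_strict_anti_general {m p : ℕ} (hm : 0 < m)
    (pr : ℝ) (hpr : pr ∈ Set.Icc (0 : ℝ) 1)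
    (Q F P₁ P₂ : Matrix (Fin m) (Fin m) ℝ)
    (R : Matrix (Fin p) (Fin p) ℝ) (H : Matrix (Fin p) (Fin m) ℝ)
    (hQ : Q.PosDef) (hR : R.PosDef)
    (hP₂ : P₂.PosDef) (h12 : (P₁ - P₂).PosDef) :
    pr * Real.log
        ((F * P₁ * Fᵀ + Q - F * P₁ * Hᵀ * (H * P₁ * Hᵀ + R)⁻¹ * H * P₁ * Fᵀ).det / P₁.det)
      + (1 - pr) * Real.log ((F * P₁ * Fᵀ + Q).det / P₁.det)
    < pr * Real.log
        ((F * P₂ * Fᵀ + Q - F * P₂ * Hᵀ * (H * P₂ * Hᵀ + R)⁻¹ * H * P₂ * Fᵀ).det / P₂.det)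
      + (1 - pr) * Real.log ((F * P₂ * Fᵀ + Q).det / P₂.det) := by
  have : Nonempty (Fin m) := Fin.pos_iff_nonempty.mp hm
  have hRic : _ < _ := log_det_riccatiUpdate_div_det_lt (F := F) (H := H) hQ hR hP₂ h12
  have hLyap : _ < _ := log_det_lyapunovUpdate_div_det_lt (F := F) hQ hP₂ h12
  simp only [riccatiUpdate, lyapunovUpdate] at hRic hLyap
  rcases hpr.1.eq_or_lt with rfl | hpr₀
  · simpa using hLyap
  · linarith [mul_lt_mul_of_pos_left hRic hpr₀,
      mul_le_mul_of_nonneg_left hLyap.le (sub_nonneg.mpr hpr.2)]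

/-- The expected one-step log-determinant ratio of the Kalman covariance update,
`g(P) = p log(det(R₁(P))/det P) + (1 − p) log(det(L(P))/det P)`, where
`R₁(P) = F P Fᵀ + Q − F P Hᵀ (H P Hᵀ + R)⁻¹ H P Fᵀ` and `L(P) = F P Fᵀ + Q`,
is strictly decreasing with respect to the Loewner order: `P₁ ≻ P₂ ≻ 0` implies
`g(P₁) < g(P₂)`. -/
theorem expected_logdet_ratio_strict_anti {m p : ℕ} (hm : 0 < m)
    (pr : ℝ) (hpr : pr ∈ Set.Icc (0 : ℝ) 1)
    (Q F P₁ P₂ : Matrix (Fin m) (Fin m) ℝ)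
    (R : Matrix (Fin p) (Fin p) ℝ) (H : Matrix (Fin p) (Fin m) ℝ)
    (hQ : Q.PosDef) (hR : R.PosDef)
    (hP₁ : P₁.IsHermitian) (hP₂ : P₂.PosDef) (h12 : (P₁ - P₂).PosDef) :
    pr * Real.log
        ((F * P₁ * Fᵀ + Q - F * P₁ * Hᵀ * (H * P₁ * Hᵀ + R)⁻¹ * H * P₁ * Fᵀ).det / P₁.det)
      + (1 - pr) * Real.log ((F * P₁ * Fᵀ + Q).det / P₁.det)
    < pr * Real.log
        ((F * P₂ * Fᵀ + Q - F * P₂ * Hᵀ * (H * P₂ * Hᵀ + R)⁻¹ * H * P₂ * Fᵀ).det / P₂.det)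
      + (1 - pr) * Real.log ((F * P₂ * Fᵀ + Q).det / P₂.det) :=
  expected_logdet_ratio_strict_anti_general hm pr hpr Q F P₁ P₂ R H hQ hR hP₂ h12
end

section
/- In the setting of the value iteration below, for every k ≥ 0 the iterate V_k is monotone with respect to the Loewner order in each component separately: V_k(P, P̄) is decreasing in P_a, decreasing in P̄_l for every l ≠ a, increasing in P_l for every l ≠ a, and increasing in P̄_a. -/
open Matrix

/-- Riccati/Lyapunov covariance update for one target: with a received measurement
(`b = true`) this is the Riccati update, otherwise the Lyapunov (predictor) update. -/
noncomputable def kalmanUpdate {m p : ℕ}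
    (F Q : Matrix (Fin m) (Fin m) ℝ) (H : Matrix (Fin p) (Fin m) ℝ)
    (R : Matrix (Fin p) (Fin p) ℝ) (P : Matrix (Fin m) (Fin m) ℝ) (b : Bool) :
    Matrix (Fin m) (Fin m) ℝ :=
  F * P * Fᵀ + Q - if b then F * P * Hᵀ * (H * P * Hᵀ + R)⁻¹ * H * P * Fᵀ else 0

/-- Lyapunov (measurement-free predictor) covariance update. -/
noncomputable def lyapUpdate {m : ℕ}
    (F Q P : Matrix (Fin m) (Fin m) ℝ) : Matrix (Fin m) (Fin m) ℝ :=
  F * P * Fᵀ + Q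

/-- Probability weight of a detection pattern `b : Fin L → Bool`. -/
noncomputable def detWeight {L : ℕ} (pd : Fin L → ℝ) (b : Fin L → Bool) : ℝ :=
  ∏ l, if b l then pd l else 1 - pd l

/-- Stopping cost `C̄(P, P̄)` (mutual-information based stochastic observability cost). -/
noncomputable def stopCost {L m : ℕ} (a : Fin L) (α β : Fin L → ℝ)
    (P Pbar : Fin L → Matrix (Fin m) (Fin m) ℝ) : ℝ :=
  - α a * Real.log (Pbar a).det + β a * Real.log (P a).det
    + ∑ l ∈ Finset.univ.erase a,
        (α l * Real.log (Pbar l).det - β l * Real.log (P l).det)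

/-- The one-step continuation cost
`C(P, P̄) = c − C̄(P, P̄) + Σ_b q(b) C̄(T(P, P̄, b))`. -/
noncomputable def contCost {L m p : ℕ} (a : Fin L) (α β : Fin L → ℝ) (c : ℝ)
    (F Q : Fin L → Matrix (Fin m) (Fin m) ℝ)
    (H : Fin L → Matrix (Fin p) (Fin m) ℝ)
    (R : Fin L → Matrix (Fin p) (Fin p) ℝ) (pd : Fin L → ℝ)
    (P Pbar : Fin L → Matrix (Fin m) (Fin m) ℝ) : ℝ :=
  c - stopCost a α β P Pbar
    + ∑ b : Fin L → Bool,
        detWeight pd b *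
          stopCost a α β
            (fun l => kalmanUpdate (F l) (Q l) (H l) (R l) (P l) (b l))
            (fun l => lyapUpdate (F l) (Q l) (Pbar l))

/-- The value iteration: `V_0 = −C̄` and
`V_{k+1}(P, P̄) = min{0, C(P, P̄) + Σ_b q(b) V_k(T(P, P̄, b))}`. -/
noncomputable def valIter {L m p : ℕ} (a : Fin L) (α β : Fin L → ℝ) (c : ℝ)
    (F Q : Fin L → Matrix (Fin m) (Fin m) ℝ)
    (H : Fin L → Matrix (Fin p) (Fin m) ℝ)
    (R : Fin L → Matrix (Fin p) (Fin p) ℝ) (pd : Fin L → ℝ) :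
    ℕ → (Fin L → Matrix (Fin m) (Fin m) ℝ) → (Fin L → Matrix (Fin m) (Fin m) ℝ) → ℝ
  | 0, P, Pbar => - stopCost a α β P Pbar
  | k + 1, P, Pbar =>
      min 0
        (contCost a α β c F Q H R pd P Pbar
          + ∑ b : Fin L → Bool,
              detWeight pd b *
                valIter a α β c F Q H R pd k
                  (fun l => kalmanUpdate (F l) (Q l) (H l) (R l) (P l) (b l))
                  (fun l => lyapUpdate (F l) (Q l) (Pbar l)))

/-!
The Lyapunov map `X ↦ F X Fᵀ + Q` and the information-form measurement update
`X ↦ (X⁻¹ + Hᵀ R⁻¹ H)⁻¹` are Loewner-monotone on positive definite matrices, and their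
log-determinant gain `log det T(X) - log det X` is antitone: by the matrix determinant lemma it
equals `log det Q + log det (X⁻¹ + Fᵀ Q⁻¹ F)`, resp. `log det R - log det (H X Hᵀ + R)`. These
properties survive composition, so they hold for the Riccati map, which by the Woodbury identity is
the Lyapunov map after the measurement update.

The stopping cost is a signed combination of log-determinants, hence monotone along the order of
the theorem, and the continuation cost is `c` plus the expected change of the stopping cost, a
signed combination of gains, hence antitone. Since the transition is monotone, induction on `k`
carries antitonicity of `V_k` through the expectation over detection patterns and `min 0`.
-/

open scoped MatrixOrder

namespace Matrix

section

variable {n p : Type*} [Fintype n] [Fintype p]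

theorem PosSemidef.mul_mul_transpose_same_s13 {A : Matrix n n ℝ} (hA : A.PosSemidef)
    (B : Matrix p n ℝ) : (B * A * Bᵀ).PosSemidef := by
  simpa [conjTranspose_eq_transpose_of_trivial] using hA.mul_mul_conjTranspose_same B

theorem mul_mul_transpose_le_mul_mul_transpose {A B : Matrix n n ℝ} (h : A ≤ B)
    (M : Matrix p n ℝ) : M * A * Mᵀ ≤ M * B * Mᵀ := by
  rw [le_iff, ← Matrix.sub_mul, ← Matrix.mul_sub]
  exact (le_iff.mp h).mul_mul_transpose_same_s13 M

theorem PosDef.mul_mul_transpose_add {X : Matrix n n ℝ} {Q : Matrix p p ℝ} (hX : X.PosDef)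
    (hQ : Q.PosDef) (F : Matrix p n ℝ) : (F * X * Fᵀ + Q).PosDef :=
  PosDef.posSemidef_add (hX.posSemidef.mul_mul_transpose_same_s13 F) hQ

end

theorem PosDef.of_le {n : Type*} {A B : Matrix n n ℝ} (hA : A.PosDef) (h : A ≤ B) :
    B.PosDef := by
  simpa using hA.add_posSemidef (le_iff.mp h)

variable {n p : Type*} [Fintype n] [DecidableEq n] [Fintype p] [DecidableEq p]

theorem det_add_mul_inv_mul_mul_det {α : Type*} [CommRing α] {A : Matrix n n α}
    {C : Matrix p p α} (U : Matrix n p α) (V : Matrix p n α) (hA : IsUnit A.det)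
    (hC : IsUnit C.det) :
    (A + U * C⁻¹ * V).det * C.det = A.det * (C + V * A⁻¹ * U).det := by
  have hC' : C + V * A⁻¹ * U = C * (1 + C⁻¹ * V * A⁻¹ * U) := by
    rw [Matrix.mul_add, Matrix.mul_one, Matrix.mul_assoc C⁻¹, Matrix.mul_assoc C⁻¹,
      mul_nonsing_inv_cancel_left _ _ hC, Matrix.mul_assoc]
  rw [Matrix.mul_assoc U, det_add_mul _ _ hA, hC', det_mul]
  simp only [Matrix.mul_assoc]
  ring

theorem PosDef.inv_le_inv {A B : Matrix n n ℝ} (hA : A.PosDef) (h : A ≤ B) : B⁻¹ ≤ A⁻¹ := by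
  have hB := hA.of_le h
  let := hA.inv.isUnit.invertible
  let := hB.isUnit.invertible
  have h₁₁ := PosDef.fromBlocks₁₁ 1 B hA.inv
  have h₂₂ := PosDef.fromBlocks₂₂ A⁻¹ 1 hB
  simp only [conjTranspose_one, Matrix.mul_one, Matrix.one_mul,
    nonsing_inv_nonsing_inv _ hA.det_pos.ne'.isUnit] at h₁₁ h₂₂
  exact le_iff.mpr (h₂₂.mp (h₁₁.mpr (le_iff.mp h)))

theorem PosSemidef.one_le_det_one_add_s13 {S : Matrix n n ℝ} (hS : S.PosSemidef) :
    1 ≤ (1 + S).det := by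
  have hH : (1 + S).IsHermitian := isHermitian_one.add hS.isHermitian
  rw [hH.det_eq_prod_eigenvalues]
  refine Finset.one_le_prod fun i _ => ?_
  set v := hH.eigenvectorBasis i
  have hv : star v.ofLp ⬝ᵥ v.ofLp = 1 := by
    rw [dotProduct_comm, ← EuclideanSpace.inner_eq_star_dotProduct, real_inner_self_eq_norm_sq,
      hH.eigenvectorBasis.orthonormal.1 i, one_pow]
  have hSv := hS.re_dotProduct_nonneg v.ofLp
  rw [hH.eigenvalues_eq i, add_mulVec, one_mulVec, dotProduct_add, hv]
  simp only [RCLike.re_to_real, RCLike.ofReal_real_eq_id, id] at hSv ⊢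
  exact le_add_of_nonneg_right hSv

theorem PosDef.det_le_det {A B : Matrix n n ℝ} (hA : A.PosDef) (h : A ≤ B) : A.det ≤ B.det := by
  obtain ⟨C, hC⟩ := CStarAlgebra.nonneg_iff_eq_star_mul_self.mp (sub_nonneg.mpr h)
  have hB : B = A + star C * C := by rw [← hC, add_sub_cancel]
  rw [hB, det_add_mul _ _ hA.det_pos.ne'.isUnit]
  refine le_mul_of_one_le_right hA.det_pos.le (PosSemidef.one_le_det_one_add_s13 ?_)
  exact (star_right_conjugate_nonneg hA.inv.posSemidef.nonneg C).posSemidef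

theorem PosDef.log_det_le_log_det {A B : Matrix n n ℝ} (hA : A.PosDef) (h : A ≤ B) :
    Real.log A.det ≤ Real.log B.det :=
  Real.log_le_log hA.det_pos (hA.det_le_det h)

theorem monotoneOn_log_det : MonotoneOn (fun X : Matrix n n ℝ => Real.log X.det) {X | X.PosDef} :=
  fun _ hX _ _ h => hX.log_det_le_log_det h

theorem log_det_inv (X : Matrix n n ℝ) : Real.log X⁻¹.det = -Real.log X.det := by
  rw [det_nonsing_inv, Ring.inverse_eq_inv', Real.log_inv]

theorem PosDef.inv_add_transpose_mul_inv_mul {X : Matrix n n ℝ} {Q : Matrix p p ℝ}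
    (hX : X.PosDef) (hQ : Q.PosDef) (F : Matrix p n ℝ) : (X⁻¹ + Fᵀ * Q⁻¹ * F).PosDef := by
  have hG := hQ.inv.posSemidef.mul_mul_transpose_same_s13 Fᵀ
  rw [transpose_transpose] at hG
  exact hX.inv.add_posSemidef hG

theorem log_det_mul_mul_transpose_add_sub_log_det {X : Matrix n n ℝ} {Q : Matrix p p ℝ}
    (hX : X.PosDef) (hQ : Q.PosDef) (F : Matrix p n ℝ) :
    Real.log (F * X * Fᵀ + Q).det - Real.log X.det
      = Real.log Q.det + Real.log (X⁻¹ + Fᵀ * Q⁻¹ * F).det := by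
  have hG := hX.inv_add_transpose_mul_inv_mul hQ F
  have key := det_add_mul_inv_mul_mul_det F Fᵀ hQ.det_pos.ne'.isUnit hX.inv.det_pos.ne'.isUnit
  rw [nonsing_inv_nonsing_inv _ hX.det_pos.ne'.isUnit, add_comm Q] at key
  have hlog := congrArg Real.log key
  rw [Real.log_mul (hX.mul_mul_transpose_add hQ F).det_pos.ne' hX.inv.det_pos.ne',
    Real.log_mul hQ.det_pos.ne' hG.det_pos.ne', log_det_inv] at hlog
  linarith

theorem log_det_inv_add_sub_log_det {X : Matrix n n ℝ} {R : Matrix p p ℝ}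
    (hX : X.PosDef) (hR : R.PosDef) (H : Matrix p n ℝ) :
    Real.log (X⁻¹ + Hᵀ * R⁻¹ * H)⁻¹.det - Real.log X.det
      = Real.log R.det - Real.log (H * X * Hᵀ + R).det := by
  have hK := hX.inv_add_transpose_mul_inv_mul hR H
  have key := det_add_mul_inv_mul_mul_det Hᵀ H hX.inv.det_pos.ne'.isUnit hR.det_pos.ne'.isUnit
  rw [nonsing_inv_nonsing_inv _ hX.det_pos.ne'.isUnit, add_comm R] at key
  have hlog := congrArg Real.log key
  rw [Real.log_mul hK.det_pos.ne' hR.det_pos.ne',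
    Real.log_mul hX.inv.det_pos.ne' (hX.mul_mul_transpose_add hR H).det_pos.ne',
    log_det_inv] at hlog
  rw [log_det_inv]
  linarith

end Matrix

section LogDetContraction

variable {n : Type*} [Fintype n] [DecidableEq n]

noncomputable def logDetGain (T : Matrix n n ℝ → Matrix n n ℝ) (X : Matrix n n ℝ) : ℝ :=
  Real.log (T X).det - Real.log X.det

-- For `X ≤ Y` the gain condition reads `log det (T Y) - log det (T X) ≤ log det Y - log det X`,
-- whence the name.
structure LogDetContraction (T : Matrix n n ℝ → Matrix n n ℝ) : Prop where
  mapsTo : Set.MapsTo T {X | X.PosDef} {X | X.PosDef}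
  monotoneOn : MonotoneOn T {X | X.PosDef}
  antitoneOn_logDetGain : AntitoneOn (logDetGain T) {X | X.PosDef}

namespace LogDetContraction

theorem comp {S T : Matrix n n ℝ → Matrix n n ℝ} (hT : LogDetContraction T)
    (hS : LogDetContraction S) : LogDetContraction (T ∘ S) where
  mapsTo := hT.mapsTo.comp hS.mapsTo
  monotoneOn := hT.monotoneOn.comp hS.monotoneOn hS.mapsTo
  antitoneOn_logDetGain X hX Y hY hXY := by
    have hT' := hT.antitoneOn_logDetGain (hS.mapsTo hX) (hS.mapsTo hY) (hS.monotoneOn hX hY hXY)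
    have hS' := hS.antitoneOn_logDetGain hX hY hXY
    simp only [logDetGain, Function.comp_apply] at hT' hS' ⊢
    linarith

theorem congr {S T : Matrix n n ℝ → Matrix n n ℝ} (hS : LogDetContraction S)
    (h : Set.EqOn S T {X | X.PosDef}) : LogDetContraction T where
  mapsTo := hS.mapsTo.congr h
  monotoneOn := hS.monotoneOn.congr h
  antitoneOn_logDetGain := hS.antitoneOn_logDetGain.congr fun X hX => by
    simp only [logDetGain, h hX]

end LogDetContraction

end LogDetContraction

section Kalman

variable {m p : ℕ}

theorem logDetContraction_lyapUpdate (F : Matrix (Fin m) (Fin m) ℝ)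
    {Q : Matrix (Fin m) (Fin m) ℝ} (hQ : Q.PosDef) : LogDetContraction (lyapUpdate F Q) where
  mapsTo X hX := hX.mul_mul_transpose_add hQ F
  monotoneOn X _ Y _ hXY := add_le_add_left (mul_mul_transpose_le_mul_mul_transpose hXY F) Q
  antitoneOn_logDetGain X hX Y hY hXY := by
    simp only [logDetGain, lyapUpdate, log_det_mul_mul_transpose_add_sub_log_det hX hQ,
      log_det_mul_mul_transpose_add_sub_log_det hY hQ, add_le_add_iff_left]
    exact (hY.inv_add_transpose_mul_inv_mul hQ F).log_det_le_log_det
      (add_le_add_left (hX.inv_le_inv hXY) _)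

theorem logDetContraction_inv_add_transpose_mul_inv_mul {R : Matrix (Fin p) (Fin p) ℝ}
    (hR : R.PosDef) (H : Matrix (Fin p) (Fin m) ℝ) :
    LogDetContraction fun X : Matrix (Fin m) (Fin m) ℝ => (X⁻¹ + Hᵀ * R⁻¹ * H)⁻¹ where
  mapsTo X hX := (hX.inv_add_transpose_mul_inv_mul hR H).inv
  monotoneOn X hX Y hY hXY := (hY.inv_add_transpose_mul_inv_mul hR H).inv_le_inv
    (add_le_add_left (hX.inv_le_inv hXY) _)
  antitoneOn_logDetGain X hX Y hY hXY := by
    simp only [logDetGain, log_det_inv_add_sub_log_det hX hR, log_det_inv_add_sub_log_det hY hR]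
    exact sub_le_sub_left ((hX.mul_mul_transpose_add hR H).log_det_le_log_det
      (add_le_add_left (mul_mul_transpose_le_mul_mul_transpose hXY H) R)) _

theorem kalmanUpdate_true_eq {F Q : Matrix (Fin m) (Fin m) ℝ} {H : Matrix (Fin p) (Fin m) ℝ}
    {R : Matrix (Fin p) (Fin p) ℝ} {P : Matrix (Fin m) (Fin m) ℝ} (hP : P.PosDef)
    (hR : R.PosDef) : kalmanUpdate F Q H R P true = lyapUpdate F Q (P⁻¹ + Hᵀ * R⁻¹ * H)⁻¹ := by
  have hPu := hP.det_pos.ne'.isUnit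
  have hRu := hR.det_pos.ne'.isUnit
  have hS : (R + H * P * Hᵀ).PosDef := add_comm (H * P * Hᵀ) R ▸ hP.mul_mul_transpose_add hR H
  have hW := add_mul_mul_inv_eq_sub P⁻¹ Hᵀ R⁻¹ H hP.inv.isUnit hR.inv.isUnit
    (by rw [nonsing_inv_nonsing_inv _ hRu, nonsing_inv_nonsing_inv _ hPu]; exact hS.isUnit)
  rw [nonsing_inv_nonsing_inv _ hPu, nonsing_inv_nonsing_inv _ hRu] at hW
  rw [kalmanUpdate, lyapUpdate, hW, add_comm R (H * P * Hᵀ), if_pos rfl]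
  simp only [Matrix.mul_sub, Matrix.sub_mul, Matrix.mul_assoc]
  abel

theorem logDetContraction_kalmanUpdate (F : Matrix (Fin m) (Fin m) ℝ)
    {Q : Matrix (Fin m) (Fin m) ℝ} (H : Matrix (Fin p) (Fin m) ℝ) {R : Matrix (Fin p) (Fin p) ℝ}
    (hQ : Q.PosDef) (hR : R.PosDef) (b : Bool) :
    LogDetContraction fun X => kalmanUpdate F Q H R X b := by
  cases b
  · exact (logDetContraction_lyapUpdate F hQ).congr fun X _ => by
      simp [kalmanUpdate, lyapUpdate]
  · exact ((logDetContraction_lyapUpdate F hQ).comp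
      (logDetContraction_inv_add_transpose_mul_inv_mul hR H)).congr
      fun X hX => (kalmanUpdate_true_eq hX hR).symm

end Kalman

-- The order on states `(P, P̄)` along which `C̄` is monotone and every `V_k` antitone.
structure StateLE {L : ℕ} {α : Type*} [LE α] (a : Fin L) (P Pbar P' Pbar' : Fin L → α) :
    Prop where
  target : P a ≤ P' a
  target_bar : Pbar' a ≤ Pbar a
  other : ∀ l ≠ a, P' l ≤ P l
  other_bar : ∀ l ≠ a, Pbar l ≤ Pbar' l

namespace StateLE

variable {L : ℕ} {a : Fin L} {α β : Type*} [Preorder α] [Preorder β] {s : Set α}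
  {f g : Fin L → α → β} {P Pbar P' Pbar' : Fin L → α}

theorem map_monotoneOn (hP : ∀ l, P l ∈ s) (hPbar : ∀ l, Pbar l ∈ s) (hP' : ∀ l, P' l ∈ s)
    (hPbar' : ∀ l, Pbar' l ∈ s) (hf : ∀ l, MonotoneOn (f l) s) (hg : ∀ l, MonotoneOn (g l) s)
    (h : StateLE a P Pbar P' Pbar') :
    StateLE a (fun l => f l (P l)) (fun l => g l (Pbar l))
      (fun l => f l (P' l)) (fun l => g l (Pbar' l)) where
  target := hf a (hP a) (hP' a) h.target
  target_bar := hg a (hPbar' a) (hPbar a) h.target_bar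
  other l hl := hf l (hP' l) (hP l) (h.other l hl)
  other_bar l hl := hg l (hPbar l) (hPbar' l) (h.other_bar l hl)

theorem map_antitoneOn (hP : ∀ l, P l ∈ s) (hPbar : ∀ l, Pbar l ∈ s) (hP' : ∀ l, P' l ∈ s)
    (hPbar' : ∀ l, Pbar' l ∈ s) (hf : ∀ l, AntitoneOn (f l) s) (hg : ∀ l, AntitoneOn (g l) s)
    (h : StateLE a P Pbar P' Pbar') :
    StateLE a (fun l => f l (P' l)) (fun l => g l (Pbar' l))
      (fun l => f l (P l)) (fun l => g l (Pbar l)) where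
  target := hf a (hP a) (hP' a) h.target
  target_bar := hg a (hPbar' a) (hPbar a) h.target_bar
  other l hl := hf l (hP' l) (hP l) (h.other l hl)
  other_bar l hl := hg l (hPbar l) (hPbar' l) (h.other_bar l hl)

end StateLE

section ValueIteration

variable {L m p : ℕ} {a : Fin L} {α β : Fin L → ℝ} {c : ℝ}
  {F Q : Fin L → Matrix (Fin m) (Fin m) ℝ} {H : Fin L → Matrix (Fin p) (Fin m) ℝ}
  {R : Fin L → Matrix (Fin p) (Fin p) ℝ} {pd : Fin L → ℝ}

theorem detWeight_nonneg (hpd : ∀ l, pd l ∈ Set.Icc (0 : ℝ) 1) (b : Fin L → Bool) :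
    0 ≤ detWeight pd b :=
  Finset.prod_nonneg fun l _ => by
    cases b l
    · exact sub_nonneg.mpr (hpd l).2
    · exact (hpd l).1

theorem sum_detWeight (pd : Fin L → ℝ) : ∑ b : Fin L → Bool, detWeight pd b = 1 := by
  unfold detWeight
  rw [← Fintype.prod_sum fun l (x : Bool) => if x then pd l else 1 - pd l]
  simp

def stopCostForm (a : Fin L) (α β x xbar : Fin L → ℝ) : ℝ :=
  -α a * xbar a + β a * x a + ∑ l ∈ Finset.univ.erase a, (α l * xbar l - β l * x l)

theorem stopCost_eq_stopCostForm (P Pbar : Fin L → Matrix (Fin m) (Fin m) ℝ) :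
    stopCost a α β P Pbar
      = stopCostForm a α β (fun l => Real.log (P l).det) (fun l => Real.log (Pbar l).det) :=
  rfl

theorem stopCostForm_sub_stopCostForm (x xbar y ybar : Fin L → ℝ) :
    stopCostForm a α β x xbar - stopCostForm a α β y ybar
      = stopCostForm a α β (fun l => x l - y l) (fun l => xbar l - ybar l) := by
  simp only [stopCostForm, mul_sub, Finset.sum_sub_distrib]
  ring

theorem stopCost_sub_stopCost (P Pbar P₁ Pbar₁ : Fin L → Matrix (Fin m) (Fin m) ℝ) :
    stopCost a α β P₁ Pbar₁ - stopCost a α β P Pbar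
      = stopCostForm a α β (fun l => Real.log (P₁ l).det - Real.log (P l).det)
          (fun l => Real.log (Pbar₁ l).det - Real.log (Pbar l).det) := by
  rw [stopCost_eq_stopCostForm, stopCost_eq_stopCostForm, stopCostForm_sub_stopCostForm]

theorem stopCostForm_le_stopCostForm (hα : ∀ l, 0 ≤ α l) (hβ : ∀ l, 0 ≤ β l)
    {x xbar x' xbar' : Fin L → ℝ} (h : StateLE a x xbar x' xbar') :
    stopCostForm a α β x xbar ≤ stopCostForm a α β x' xbar' := by
  have htarget_bar := mul_le_mul_of_nonneg_left h.target_bar (hα a)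
  have htarget := mul_le_mul_of_nonneg_left h.target (hβ a)
  have hother := Finset.sum_le_sum fun l (hl : l ∈ Finset.univ.erase a) =>
    sub_le_sub (mul_le_mul_of_nonneg_left (h.other_bar l (Finset.ne_of_mem_erase hl)) (hα l))
      (mul_le_mul_of_nonneg_left (h.other l (Finset.ne_of_mem_erase hl)) (hβ l))
  unfold stopCostForm
  linarith

theorem contCost_eq (P Pbar : Fin L → Matrix (Fin m) (Fin m) ℝ) :
    contCost a α β c F Q H R pd P Pbar
      = c + ∑ b : Fin L → Bool, detWeight pd b *
          (stopCost a α β (fun l => kalmanUpdate (F l) (Q l) (H l) (R l) (P l) (b l))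
              (fun l => lyapUpdate (F l) (Q l) (Pbar l))
            - stopCost a α β P Pbar) := by
  simp only [contCost, mul_sub, Finset.sum_sub_distrib, ← Finset.sum_mul, sum_detWeight]
  ring

variable {P Pbar P' Pbar' : Fin L → Matrix (Fin m) (Fin m) ℝ}

theorem stopCost_le_stopCost (hα : ∀ l, 0 ≤ α l) (hβ : ∀ l, 0 ≤ β l)
    (hP : ∀ l, (P l).PosDef) (hPbar : ∀ l, (Pbar l).PosDef)
    (hP' : ∀ l, (P' l).PosDef) (hPbar' : ∀ l, (Pbar' l).PosDef)
    (h : StateLE a P Pbar P' Pbar') : stopCost a α β P Pbar ≤ stopCost a α β P' Pbar' :=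
  stopCostForm_le_stopCostForm hα hβ <| h.map_monotoneOn hP hPbar hP' hPbar'
    (fun _ => monotoneOn_log_det) (fun _ => monotoneOn_log_det)

theorem contCost_le_contCost (hα : ∀ l, 0 ≤ α l) (hβ : ∀ l, 0 ≤ β l)
    (hQ : ∀ l, (Q l).PosDef) (hR : ∀ l, (R l).PosDef) (hpd : ∀ l, pd l ∈ Set.Icc (0 : ℝ) 1)
    (hP : ∀ l, (P l).PosDef) (hPbar : ∀ l, (Pbar l).PosDef)
    (hP' : ∀ l, (P' l).PosDef) (hPbar' : ∀ l, (Pbar' l).PosDef)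
    (h : StateLE a P Pbar P' Pbar') :
    contCost a α β c F Q H R pd P' Pbar' ≤ contCost a α β c F Q H R pd P Pbar := by
  rw [contCost_eq, contCost_eq]
  gcongr c + ∑ b, ?_ * ?_ with b
  · exact detWeight_nonneg hpd b
  · have hK l := logDetContraction_kalmanUpdate (F l) (H l) (hQ l) (hR l) (b l)
    have hL l := logDetContraction_lyapUpdate (F l) (hQ l)
    have hgain := h.map_antitoneOn hP hPbar hP' hPbar'
      (fun l => (hK l).antitoneOn_logDetGain) (fun l => (hL l).antitoneOn_logDetGain)
    simp only [logDetGain] at hgain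
    rw [stopCost_sub_stopCost, stopCost_sub_stopCost]
    exact stopCostForm_le_stopCostForm hα hβ hgain

theorem valIter_antitone (hα : ∀ l, 0 ≤ α l) (hβ : ∀ l, 0 ≤ β l) (hQ : ∀ l, (Q l).PosDef)
    (hR : ∀ l, (R l).PosDef) (hpd : ∀ l, pd l ∈ Set.Icc (0 : ℝ) 1) (k : ℕ)
    (hP : ∀ l, (P l).PosDef) (hPbar : ∀ l, (Pbar l).PosDef)
    (hP' : ∀ l, (P' l).PosDef) (hPbar' : ∀ l, (Pbar' l).PosDef)
    (h : StateLE a P Pbar P' Pbar') :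
    valIter a α β c F Q H R pd k P' Pbar' ≤ valIter a α β c F Q H R pd k P Pbar := by
  induction k generalizing P Pbar P' Pbar' with
  | zero => exact neg_le_neg (stopCost_le_stopCost hα hβ hP hPbar hP' hPbar' h)
  | succ k ih =>
    refine min_le_min_left 0 (add_le_add
      (contCost_le_contCost hα hβ hQ hR hpd hP hPbar hP' hPbar' h)
      (Finset.sum_le_sum fun b _ => mul_le_mul_of_nonneg_left ?_ (detWeight_nonneg hpd b)))
    have hK l := logDetContraction_kalmanUpdate (F l) (H l) (hQ l) (hR l) (b l)
    have hL l := logDetContraction_lyapUpdate (F l) (hQ l)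
    exact ih (fun l => (hK l).mapsTo (hP l)) (fun l => (hL l).mapsTo (hPbar l))
      (fun l => (hK l).mapsTo (hP' l)) (fun l => (hL l).mapsTo (hPbar' l))
      (h.map_monotoneOn hP hPbar hP' hPbar' (fun l => (hK l).monotoneOn)
        (fun l => (hL l).monotoneOn))

end ValueIteration

theorem valIter_monotone_general {L m p : ℕ} (a : Fin L)
    (α β : Fin L → ℝ) (hα : ∀ l, 0 ≤ α l) (hβ : ∀ l, 0 ≤ β l) (c : ℝ)
    (F Q : Fin L → Matrix (Fin m) (Fin m) ℝ)
    (H : Fin L → Matrix (Fin p) (Fin m) ℝ)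
    (R : Fin L → Matrix (Fin p) (Fin p) ℝ)
    (hQ : ∀ l, (Q l).PosDef) (hR : ∀ l, (R l).PosDef)
    (pd : Fin L → ℝ) (hpd : ∀ l, pd l ∈ Set.Icc (0 : ℝ) 1)
    (k : ℕ)
    (P Pbar : Fin L → Matrix (Fin m) (Fin m) ℝ)
    (hP : ∀ l, (P l).PosDef) (hPbar : ∀ l, (Pbar l).PosDef) :
    (∀ X : Matrix (Fin m) (Fin m) ℝ, X.PosDef → (X - P a).PosSemidef →
        valIter a α β c F Q H R pd k (Function.update P a X) Pbar
          ≤ valIter a α β c F Q H R pd k P Pbar) ∧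
    (∀ l : Fin L, l ≠ a → ∀ X : Matrix (Fin m) (Fin m) ℝ, X.PosDef →
        (X - Pbar l).PosSemidef →
        valIter a α β c F Q H R pd k P (Function.update Pbar l X)
          ≤ valIter a α β c F Q H R pd k P Pbar) ∧
    (∀ l : Fin L, l ≠ a → ∀ X : Matrix (Fin m) (Fin m) ℝ, X.PosDef →
        (X - P l).PosSemidef →
        valIter a α β c F Q H R pd k P Pbar
          ≤ valIter a α β c F Q H R pd k (Function.update P l X) Pbar) ∧
    (∀ X : Matrix (Fin m) (Fin m) ℝ, X.PosDef → (X - Pbar a).PosSemidef →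
        valIter a α β c F Q H R pd k P Pbar
          ≤ valIter a α β c F Q H R pd k P (Function.update Pbar a X)) := by
  have hupd (Z : Fin L → Matrix (Fin m) (Fin m) ℝ) (hZ : ∀ l, (Z l).PosDef) j X
      (hX : X.PosDef) : ∀ l, (Function.update Z j X l).PosDef :=
    (Function.forall_update_iff Z fun _ Y => Y.PosDef).2 ⟨hX, fun l _ => hZ l⟩
  refine ⟨fun X hX hle => ?_, fun l hl X hX hle => ?_, fun l hl X hX hle => ?_,
    fun X hX hle => ?_⟩
  · exact valIter_antitone hα hβ hQ hR hpd k hP hPbar (hupd P hP a X hX) hPbar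
      ⟨le_update_self_iff.2 hle a, le_rfl, fun j hj => by simp [Function.update_of_ne hj],
        fun _ _ => le_rfl⟩
  · exact valIter_antitone hα hβ hQ hR hpd k hP hPbar hP (hupd Pbar hPbar l X hX)
      ⟨le_rfl, by simp [Function.update_of_ne hl.symm], fun _ _ => le_rfl,
        fun j _ => le_update_self_iff.2 hle j⟩
  · exact valIter_antitone hα hβ hQ hR hpd k (hupd P hP l X hX) hPbar hP hPbar
      ⟨by simp [Function.update_of_ne hl.symm], le_rfl, fun j _ => le_update_self_iff.2 hle j,
        fun _ _ => le_rfl⟩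
  · exact valIter_antitone hα hβ hQ hR hpd k hP (hupd Pbar hPbar a X hX) hP hPbar
      ⟨le_rfl, le_update_self_iff.2 hle a, fun _ _ => le_rfl,
        fun j hj => by simp [Function.update_of_ne hj]⟩

/-- Every value-iteration iterate `V_k(P, P̄)` is, with respect to the Loewner order and
with all other components held fixed: decreasing in `P_a`, decreasing in `P̄_l` for
`l ≠ a`, increasing in `P_l` for `l ≠ a`, and increasing in `P̄_a`. -/
theorem valIter_monotone {L m p : ℕ} (hL : 2 ≤ L) (a : Fin L)
    (α β : Fin L → ℝ) (hα : ∀ l, 0 ≤ α l) (hβ : ∀ l, 0 ≤ β l) (c : ℝ)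
    (F Q : Fin L → Matrix (Fin m) (Fin m) ℝ)
    (H : Fin L → Matrix (Fin p) (Fin m) ℝ)
    (R : Fin L → Matrix (Fin p) (Fin p) ℝ)
    (hQ : ∀ l, (Q l).PosDef) (hR : ∀ l, (R l).PosDef)
    (pd : Fin L → ℝ) (hpd : ∀ l, pd l ∈ Set.Icc (0 : ℝ) 1)
    (k : ℕ)
    (P Pbar : Fin L → Matrix (Fin m) (Fin m) ℝ)
    (hP : ∀ l, (P l).PosDef) (hPbar : ∀ l, (Pbar l).PosDef) :
    (∀ X : Matrix (Fin m) (Fin m) ℝ, X.PosDef → (X - P a).PosSemidef →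
        valIter a α β c F Q H R pd k (Function.update P a X) Pbar
          ≤ valIter a α β c F Q H R pd k P Pbar) ∧
    (∀ l : Fin L, l ≠ a → ∀ X : Matrix (Fin m) (Fin m) ℝ, X.PosDef →
        (X - Pbar l).PosSemidef →
        valIter a α β c F Q H R pd k P (Function.update Pbar l X)
          ≤ valIter a α β c F Q H R pd k P Pbar) ∧
    (∀ l : Fin L, l ≠ a → ∀ X : Matrix (Fin m) (Fin m) ℝ, X.PosDef →
        (X - P l).PosSemidef →
        valIter a α β c F Q H R pd k P Pbar
          ≤ valIter a α β c F Q H R pd k (Function.update P l X) Pbar) ∧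
    (∀ X : Matrix (Fin m) (Fin m) ℝ, X.PosDef → (X - Pbar a).PosSemidef →
        valIter a α β c F Q H R pd k P Pbar
          ≤ valIter a α β c F Q H R pd k P (Function.update Pbar a X)) :=
  valIter_monotone_general a α β hα hβ c F Q H R hQ hR pd hpd k P Pbar hP hPbar
end
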